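/- If the initial ergotropic gap vanishes, ergotropy transport cannot be gainful: for a bipartite state ρ_{BC} with E(ρ_{BC}) = E(ρ_B) + E(ρ_C), and any unitary U_{BC} commuting with H_{BC} = H_B ⊗ 1 + 1 ⊗ H_C, the ergotropy gain E_G = E(ρ̃_B) + E(ρ̃_C) − E(ρ_B) − E(ρ_C) satisfies E_G ≤ 0, where ρ̃_{BC} = U_{BC} ρ_{BC} U_{BC}† and ρ̃_B, ρ̃_C are its marginals. -/

import Mathlib

open Matrix Kronecker
open scoped ComplexOrder

noncomputable def ergotropy {n : Type*} [Fintype n] [DecidableEq n]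
    (H ρ : Matrix n n ℂ) : ℝ :=
  (Matrix.trace (ρ * H)).re -
    sInf {x : ℝ | ∃ U ∈ Matrix.unitaryGroup n ℂ,
      x = (Matrix.trace (U * ρ * star U * H)).re}

def IsDensityMatrix {n : Type*} [Fintype n] (ρ : Matrix n n ℂ) : Prop :=
  ρ.PosSemidef ∧ ρ.trace = 1

noncomputable def ptraceC {dB dC : Type*} [Fintype dB] [Fintype dC]
    (ρ : Matrix (dB × dC) (dB × dC) ℂ) : Matrix dB dB ℂ :=
  Matrix.of fun i j => ∑ k, ρ (i, k) (j, k)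

noncomputable def ptraceB {dB dC : Type*} [Fintype dB] [Fintype dC]
    (ρ : Matrix (dB × dC) (dB × dC) ℂ) : Matrix dC dC ℂ :=
  Matrix.of fun i j => ∑ k, ρ (k, i) (k, j)

namespace GainNonposAux

variable {n : Type*} [Fintype n] [DecidableEq n]

/-- The set over which the infimum in the ergotropy is taken. -/
noncomputable def eSet (H ρ : Matrix n n ℂ) : Set ℝ :=
  {x : ℝ | ∃ U ∈ Matrix.unitaryGroup n ℂ,
    x = (Matrix.trace (U * ρ * star U * H)).re}

lemma ergotropy_def (H ρ : Matrix n n ℂ) :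
    ergotropy H ρ = (Matrix.trace (ρ * H)).re - sInf (eSet H ρ) := rfl

lemma eSet_nonempty (H ρ : Matrix n n ℂ) : (eSet H ρ).Nonempty :=
  ⟨(Matrix.trace ((1 : Matrix n n ℂ) * ρ * star (1 : Matrix n n ℂ) * H)).re,
    1, one_mem _, rfl⟩

lemma unitary_entry_abs_le {U : Matrix n n ℂ} (hU : U ∈ Matrix.unitaryGroup n ℂ)
    (i j : n) : ‖U i j‖ ≤ 1 := by
  have h := hU.2
  have h2 := congrFun (congrFun h i) i
  simp only [Matrix.mul_apply, Matrix.one_apply_eq] at h2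
  have h3 : ∑ k, (Complex.normSq (U i k) : ℂ) = 1 := by
    simpa [Matrix.star_apply, Complex.mul_conj] using h2
  have h4 : ∑ k, Complex.normSq (U i k) = 1 := by exact_mod_cast h3
  have h5 : Complex.normSq (U i j) ≤ 1 := h4 ▸ Finset.single_le_sum
    (fun k _ => Complex.normSq_nonneg _) (Finset.mem_univ j)
  rw [← Complex.sq_norm] at h5
  nlinarith [norm_nonneg (U i j)]

lemma conj_entry_bound {V : Matrix n n ℂ} (hV : V ∈ Matrix.unitaryGroup n ℂ)
    (ρ : Matrix n n ℂ) (i l : n) :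
    ‖(V * ρ * star V) i l‖ ≤ ∑ p : n × n, ‖ρ p.1 p.2‖ := by
  have hVe : ∀ i j, ‖V i j‖ ≤ 1 := unitary_entry_abs_le hV
  have hrw : (V * ρ * star V) i l = ∑ k, ∑ j, V i j * ρ j k * (starRingEnd ℂ) (V l k) := by
    simp [Matrix.mul_apply, Matrix.star_apply, Finset.sum_mul]
  rw [hrw, Fintype.sum_prod_type]
  calc ‖∑ k, ∑ j, V i j * ρ j k * (starRingEnd ℂ) (V l k)‖
      ≤ ∑ k, ∑ j, ‖V i j * ρ j k * (starRingEnd ℂ) (V l k)‖ := by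
        refine (norm_sum_le _ _).trans
          (Finset.sum_le_sum fun k _ => norm_sum_le _ _)
    _ ≤ ∑ k, ∑ j, ‖ρ j k‖ := by
        refine Finset.sum_le_sum fun k _ => Finset.sum_le_sum fun j _ => ?_
        rw [norm_mul, norm_mul, Complex.norm_conj]
        nlinarith [hVe i j, hVe l k, norm_nonneg (V i j), norm_nonneg (V l k),
          norm_nonneg (ρ j k),
          mul_nonneg (norm_nonneg (ρ j k)) (norm_nonneg (V l k))]
    _ = ∑ j, ∑ k, ‖ρ j k‖ := Finset.sum_comm

lemma trace_re_lower (H ρ : Matrix n n ℂ) {V : Matrix n n ℂ}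
    (hV : V ∈ Matrix.unitaryGroup n ℂ) :
    -((∑ p : n × n, ‖ρ p.1 p.2‖) * (∑ p : n × n, ‖H p.1 p.2‖))
      ≤ (Matrix.trace (V * ρ * star V * H)).re := by
  set M := V * ρ * star V with hMdef
  have hM : ∀ i l, ‖M i l‖ ≤ ∑ p : n × n, ‖ρ p.1 p.2‖ :=
    fun i l => conj_entry_bound hV ρ i l
  have h1 : ‖Matrix.trace (M * H)‖ ≤
      (∑ p : n × n, ‖ρ p.1 p.2‖) * (∑ p : n × n, ‖H p.1 p.2‖) := by
    calc ‖Matrix.trace (M * H)‖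
        ≤ ∑ i, ∑ l, ‖M i l * H l i‖ := by
          simp only [Matrix.trace, Matrix.diag, Matrix.mul_apply]
          exact (norm_sum_le _ _).trans
            (Finset.sum_le_sum fun i _ => norm_sum_le _ _)
      _ ≤ ∑ i, ∑ l, (∑ p : n × n, ‖ρ p.1 p.2‖) * ‖H l i‖ := by
          refine Finset.sum_le_sum fun i _ => Finset.sum_le_sum fun l _ => ?_
          rw [norm_mul]
          exact mul_le_mul_of_nonneg_right (hM i l) (norm_nonneg _)
      _ = (∑ p : n × n, ‖ρ p.1 p.2‖) * (∑ p : n × n, ‖H p.1 p.2‖) := by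
          have key : ∀ B : ℝ, ∑ i : n, ∑ l : n, B * ‖H l i‖
              = B * ∑ p : n × n, ‖H p.1 p.2‖ := by
            intro B
            rw [Fintype.sum_prod_type, Finset.mul_sum, Finset.sum_comm]
            exact Finset.sum_congr rfl fun l _ => (Finset.mul_sum _ _ _).symm
          exact key _
  have h2 := Complex.abs_re_le_norm (Matrix.trace (M * H))
  have h3 := neg_abs_le (Matrix.trace (M * H)).re
  nlinarith [abs_nonneg (Matrix.trace (M * H)).re]

lemma bddBelow_eSet (H ρ : Matrix n n ℂ) : BddBelow (eSet H ρ) := by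
  refine ⟨-((∑ p : n × n, ‖ρ p.1 p.2‖) * (∑ p : n × n, ‖H p.1 p.2‖)),
    ?_⟩
  rintro x ⟨V, hV, rfl⟩
  exact trace_re_lower H ρ hV

lemma eSet_conj (H ρ : Matrix n n ℂ) {U : Matrix n n ℂ}
    (hU : U ∈ Matrix.unitaryGroup n ℂ) :
    eSet H (U * ρ * star U) = eSet H ρ := by
  ext x
  constructor
  · rintro ⟨V, hV, rfl⟩
    refine ⟨V * U, mul_mem hV hU, ?_⟩
    rw [StarMul.star_mul]
    noncomm_ring
  · rintro ⟨W, hW, rfl⟩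
    refine ⟨W * star U, mul_mem hW (Unitary.star_mem hU), ?_⟩
    have h1 : (star U : Matrix n n ℂ) * U = 1 := hU.1
    rw [StarMul.star_mul, star_star]
    have key : W * star U * (U * ρ * star U) * (U * star W) = W * ρ * star W := by
      calc W * star U * (U * ρ * star U) * (U * star W)
          = W * ((star U * U) * ρ * (star U * U)) * star W := by noncomm_ring
        _ = W * ρ * star W := by rw [h1]; noncomm_ring
    rw [key]

lemma trace_conj (H ρ : Matrix n n ℂ) {U : Matrix n n ℂ}
    (hU : U ∈ Matrix.unitaryGroup n ℂ) (hc : U * H = H * U) :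
    Matrix.trace (U * ρ * star U * H) = Matrix.trace (ρ * H) := by
  have h1 : (star U : Matrix n n ℂ) * U = 1 := hU.1
  have h2 : star U * H * U = H := by
    rw [mul_assoc, ← hc, ← mul_assoc, h1, one_mul]
  calc Matrix.trace (U * ρ * star U * H)
      = Matrix.trace (U * (ρ * (star U * H))) := by noncomm_ring
    _ = Matrix.trace (ρ * (star U * H) * U) := Matrix.trace_mul_comm _ _
    _ = Matrix.trace (ρ * (star U * H * U)) := by noncomm_ring
    _ = Matrix.trace (ρ * H) := by rw [h2]

section Bipartite

variable {dB dC : ℕ}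

lemma star_kron (V : Matrix (Fin dB) (Fin dB) ℂ) (W : Matrix (Fin dC) (Fin dC) ℂ) :
    star (V ⊗ₖ W) = star V ⊗ₖ star W := by
  ext ⟨i, k⟩ ⟨j, l⟩
  simp [Matrix.star_apply, Matrix.kroneckerMap_apply, star_mul']

lemma kron_mem_unitary {V : Matrix (Fin dB) (Fin dB) ℂ} {W : Matrix (Fin dC) (Fin dC) ℂ}
    (hV : V ∈ Matrix.unitaryGroup (Fin dB) ℂ) (hW : W ∈ Matrix.unitaryGroup (Fin dC) ℂ) :
    V ⊗ₖ W ∈ Matrix.unitaryGroup (Fin dB × Fin dC) ℂ := by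
  rw [Matrix.mem_unitaryGroup_iff, star_kron, ← Matrix.mul_kronecker_mul, hV.2, hW.2,
    Matrix.one_kronecker_one]

lemma trace_kronB (HB : Matrix (Fin dB) (Fin dB) ℂ)
    (σ : Matrix (Fin dB × Fin dC) (Fin dB × Fin dC) ℂ) :
    Matrix.trace (σ * (HB ⊗ₖ (1 : Matrix (Fin dC) (Fin dC) ℂ)))
      = Matrix.trace (ptraceC σ * HB) := by
  simp only [Matrix.trace, Matrix.diag, Matrix.mul_apply, ptraceC, Matrix.of_apply,
    Matrix.kroneckerMap_apply, Matrix.one_apply, Fintype.sum_prod_type,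
    mul_ite, mul_one, mul_zero, Finset.sum_ite_eq', Finset.mem_univ, if_true,
    Finset.sum_mul]
  exact Finset.sum_congr rfl fun i _ => Finset.sum_comm

lemma trace_kronC (HC : Matrix (Fin dC) (Fin dC) ℂ)
    (σ : Matrix (Fin dB × Fin dC) (Fin dB × Fin dC) ℂ) :
    Matrix.trace (σ * ((1 : Matrix (Fin dB) (Fin dB) ℂ) ⊗ₖ HC))
      = Matrix.trace (ptraceB σ * HC) := by
  calc Matrix.trace (σ * ((1 : Matrix (Fin dB) (Fin dB) ℂ) ⊗ₖ HC))
      = ∑ i, ∑ k, ∑ j, ∑ l, σ (i, k) (j, l)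
          * ((1 : Matrix (Fin dB) (Fin dB) ℂ) j i * HC l k) := by
        simp [Matrix.trace, Matrix.diag, Matrix.mul_apply, Fintype.sum_prod_type]
    _ = ∑ i, ∑ k, ∑ l, σ (i, k) (i, l) * HC l k := by
        refine Finset.sum_congr rfl fun i _ => Finset.sum_congr rfl fun k _ => ?_
        rw [Finset.sum_comm]
        simp [Matrix.one_apply]
    _ = Matrix.trace (ptraceB σ * HC) := by
        simp only [Matrix.trace, Matrix.diag, Matrix.mul_apply, ptraceB, Matrix.of_apply,
          Finset.sum_mul]
        rw [Finset.sum_comm]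
        exact Finset.sum_congr rfl fun k _ => Finset.sum_comm

lemma trace_split (HB : Matrix (Fin dB) (Fin dB) ℂ) (HC : Matrix (Fin dC) (Fin dC) ℂ)
    (σ : Matrix (Fin dB × Fin dC) (Fin dB × Fin dC) ℂ) :
    Matrix.trace (σ * (HB ⊗ₖ (1 : Matrix (Fin dC) (Fin dC) ℂ)
        + (1 : Matrix (Fin dB) (Fin dB) ℂ) ⊗ₖ HC))
      = Matrix.trace (ptraceC σ * HB) + Matrix.trace (ptraceB σ * HC) := by
  rw [Matrix.mul_add, Matrix.trace_add, trace_kronB, trace_kronC]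

lemma trace_cyc1 {m : Type*} [Fintype m] [DecidableEq m] (A σ K : Matrix m m ℂ) :
    Matrix.trace (A * σ * star A * K) = Matrix.trace (σ * (star A * K * A)) := by
  calc Matrix.trace (A * σ * star A * K)
      = Matrix.trace (A * (σ * (star A * K))) := by noncomm_ring
    _ = Matrix.trace (σ * (star A * K) * A) := Matrix.trace_mul_comm _ _
    _ = Matrix.trace (σ * (star A * K * A)) := by noncomm_ring

lemma trace_cyc2 {m : Type*} [Fintype m] [DecidableEq m] (σ K V : Matrix m m ℂ) :
    Matrix.trace (σ * (star V * K * V)) = Matrix.trace (V * σ * star V * K) := by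
  calc Matrix.trace (σ * (star V * K * V))
      = Matrix.trace (σ * (star V * K) * V) := by noncomm_ring
    _ = Matrix.trace (V * (σ * (star V * K))) := (Matrix.trace_mul_comm _ _).symm
    _ = Matrix.trace (V * σ * star V * K) := by noncomm_ring

lemma prod_conj_trace (HB : Matrix (Fin dB) (Fin dB) ℂ) (HC : Matrix (Fin dC) (Fin dC) ℂ)
    {V : Matrix (Fin dB) (Fin dB) ℂ} {W : Matrix (Fin dC) (Fin dC) ℂ}
    (hV : V ∈ Matrix.unitaryGroup (Fin dB) ℂ) (hW : W ∈ Matrix.unitaryGroup (Fin dC) ℂ)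
    (σ : Matrix (Fin dB × Fin dC) (Fin dB × Fin dC) ℂ) :
    Matrix.trace ((V ⊗ₖ W) * σ * star (V ⊗ₖ W) * (HB ⊗ₖ (1 : Matrix (Fin dC) (Fin dC) ℂ)
        + (1 : Matrix (Fin dB) (Fin dB) ℂ) ⊗ₖ HC))
      = Matrix.trace (V * ptraceC σ * star V * HB)
        + Matrix.trace (W * ptraceB σ * star W * HC) := by
  have h1 : star (V ⊗ₖ W) * (HB ⊗ₖ (1 : Matrix (Fin dC) (Fin dC) ℂ)) * (V ⊗ₖ W)
      = (star V * HB * V) ⊗ₖ (1 : Matrix (Fin dC) (Fin dC) ℂ) := by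
    rw [star_kron, ← Matrix.mul_kronecker_mul, ← Matrix.mul_kronecker_mul,
      Matrix.mul_one, hW.1]
  have h2 : star (V ⊗ₖ W) * ((1 : Matrix (Fin dB) (Fin dB) ℂ) ⊗ₖ HC) * (V ⊗ₖ W)
      = (1 : Matrix (Fin dB) (Fin dB) ℂ) ⊗ₖ (star W * HC * W) := by
    rw [star_kron, ← Matrix.mul_kronecker_mul, ← Matrix.mul_kronecker_mul,
      Matrix.mul_one, hV.1]
  rw [Matrix.mul_add, Matrix.trace_add, trace_cyc1, trace_cyc1, h1, h2,
    trace_kronB, trace_kronC, trace_cyc2, trace_cyc2]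

end Bipartite

end GainNonposAux

/-- If the initial ergotropic gap vanishes, ergotropy transport cannot
be gainful: the ergotropy gain under any energy-conserving unitary is nonpositive. -/
theorem gain_nonpos_of_zero_gap {dB dC : ℕ}
    (HB : Matrix (Fin dB) (Fin dB) ℂ) (HC : Matrix (Fin dC) (Fin dC) ℂ)
    (hHB : HB.IsHermitian) (hHC : HC.IsHermitian)
    (ρ : Matrix (Fin dB × Fin dC) (Fin dB × Fin dC) ℂ) (hρ : IsDensityMatrix ρ)
    (U : Matrix (Fin dB × Fin dC) (Fin dB × Fin dC) ℂ)
    (hU : U ∈ Matrix.unitaryGroup (Fin dB × Fin dC) ℂ)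
    (hcomm : U * (HB ⊗ₖ (1 : Matrix (Fin dC) (Fin dC) ℂ)
        + (1 : Matrix (Fin dB) (Fin dB) ℂ) ⊗ₖ HC)
      = (HB ⊗ₖ (1 : Matrix (Fin dC) (Fin dC) ℂ)
        + (1 : Matrix (Fin dB) (Fin dB) ℂ) ⊗ₖ HC) * U)
    (hgap : ergotropy (HB ⊗ₖ (1 : Matrix (Fin dC) (Fin dC) ℂ)
        + (1 : Matrix (Fin dB) (Fin dB) ℂ) ⊗ₖ HC) ρ
      = ergotropy HB (ptraceC ρ) + ergotropy HC (ptraceB ρ)) :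
    ergotropy HB (ptraceC (U * ρ * star U)) + ergotropy HC (ptraceB (U * ρ * star U))
      - ergotropy HB (ptraceC ρ) - ergotropy HC (ptraceB ρ) ≤ 0 := by
  classical
  open GainNonposAux in
  set Htot : Matrix (Fin dB × Fin dC) (Fin dB × Fin dC) ℂ :=
    HB ⊗ₖ (1 : Matrix (Fin dC) (Fin dC) ℂ) + (1 : Matrix (Fin dB) (Fin dB) ℂ) ⊗ₖ HC
    with hHtot
  set ρ' : Matrix (Fin dB × Fin dC) (Fin dB × Fin dC) ℂ := U * ρ * star U with hρ'
  -- the key infimum inequality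
  have hsum : ∀ b ∈ eSet HB (ptraceC ρ'), ∀ c ∈ eSet HC (ptraceB ρ'),
      sInf (eSet Htot ρ') ≤ b + c := by
    rintro b ⟨V, hV, rfl⟩ c ⟨W, hW, rfl⟩
    have hmem : (Matrix.trace ((V ⊗ₖ W) * ρ' * star (V ⊗ₖ W) * Htot)).re
        ∈ eSet Htot ρ' := ⟨V ⊗ₖ W, kron_mem_unitary hV hW, rfl⟩
    have hle := csInf_le (bddBelow_eSet Htot ρ') hmem
    have heq := prod_conj_trace HB HC hV hW ρ'
    rw [hHtot] at hle
    rw [heq] at hle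
    rw [Complex.add_re] at hle
    exact hle
  have hinf : sInf (eSet Htot ρ')
      ≤ sInf (eSet HB (ptraceC ρ')) + sInf (eSet HC (ptraceB ρ')) := by
    have h2 : ∀ b ∈ eSet HB (ptraceC ρ'), sInf (eSet Htot ρ') - b
        ≤ sInf (eSet HC (ptraceB ρ')) := fun b hb =>
      le_csInf (eSet_nonempty _ _) fun c hc => by linarith [hsum b hb c hc]
    have h3 : sInf (eSet Htot ρ') - sInf (eSet HC (ptraceB ρ'))
        ≤ sInf (eSet HB (ptraceC ρ')) :=
      le_csInf (eSet_nonempty _ _) fun b hb => by linarith [h2 b hb]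
    linarith
  -- trace identities
  have hsplit := trace_split HB HC ρ'
  have htr : Matrix.trace (ρ' * Htot) = Matrix.trace (ρ * Htot) :=
    trace_conj Htot ρ hU hcomm
  have hset : eSet Htot ρ' = eSet Htot ρ := eSet_conj Htot ρ hU
  -- assemble
  have key : ergotropy HB (ptraceC ρ') + ergotropy HC (ptraceB ρ')
      ≤ ergotropy Htot ρ := by
    rw [ergotropy_def, ergotropy_def, ergotropy_def, ← hset, ← htr]
    have hre : (Matrix.trace (ρ' * Htot)).re
        = (Matrix.trace (ptraceC ρ' * HB)).re + (Matrix.trace (ptraceB ρ' * HC)).re := by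
      rw [hsplit, Complex.add_re]
    rw [hre]
    linarith [hinf]
  have hgap' : ergotropy Htot ρ = ergotropy HB (ptraceC ρ) + ergotropy HC (ptraceB ρ) := hgap
  linarith [key, hgap']
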